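/- arXiv:1605.06796 — 3 statements merged into one kernel-verified Lean document; each statement's English description precedes it below -/
import Mathlib

section
/- Let z̄, μ ∈ ℝ^J with ‖z̄‖₂ ≤ 2B√J and ‖μ‖₂ ≤ 2B√J, let S, Σ be J×J symmetric matrices with S + γI positive definite (γ > 0) and Σ positive definite, and suppose ‖(S+γI)^{-1}‖_F ≤ √J/γ and ‖Σ^{-1}‖_F ≤ c̃. Then |z̄ᵀ(S + γI)^{-1} z̄ − μᵀ(Σ + γI)^{-1} μ| ≤ (√J/γ)·‖z̄‖₂²·‖Σ − S‖_F·c̃ + (‖z̄‖₂ + ‖μ‖₂)·‖z̄ − μ‖₂·c̃. -/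
/-- Frobenius norm of a matrix. -/
noncomputable def frobNorm {J : ℕ} (A : Matrix (Fin J) (Fin J) ℝ) : ℝ :=
  Real.sqrt (∑ i, ∑ j, (A i j) ^ 2)

/-- Euclidean norm of a vector. -/
noncomputable def eNorm {J : ℕ} (v : Fin J → ℝ) : ℝ :=
  Real.sqrt (∑ i, (v i) ^ 2)

/-!
With `A = (S + γI)⁻¹` and `R = (Σ + γI)⁻¹`, the difference splits as
`zᵀ(A - R)z + zᵀR(z - μ) + (z - μ)ᵀRμ`, and the resolvent identity gives
`A - R = A(Σ - S)R`. Each term is bounded by Cauchy–Schwarz and submultiplicativity of the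
Frobenius norm, which dominates the operator norm. It remains to see `‖R‖_F ≤ ‖Σ⁻¹‖_F`: with
`C = Σ⁻¹` one has `C - R = γCR`, hence `C² - R² = γ(CRC + RCR)`, whose trace is nonnegative.
-/

open Matrix WithLp

attribute [local instance] Matrix.frobeniusNormedAddCommGroup

section FrobeniusNorm

variable {m n : Type*} [Fintype m] [Fintype n]

theorem Matrix.frobenius_norm_mulVec_le {𝕜 : Type*} [RCLike 𝕜] (A : Matrix m n 𝕜) (v : n → 𝕜) :
    ‖toLp 2 (A *ᵥ v)‖ ≤ ‖A‖ * ‖toLp 2 v‖ := by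
  simpa only [← frobenius_norm_replicateCol (ι := Unit), replicateCol_mulVec] using
    frobenius_norm_mul A (replicateCol Unit v)

theorem Matrix.abs_dotProduct_le (v w : n → ℝ) : |v ⬝ᵥ w| ≤ ‖toLp 2 v‖ * ‖toLp 2 w‖ := by
  simpa [EuclideanSpace.inner_toLp_toLp, dotProduct_comm] using
    abs_real_inner_le_norm (toLp 2 v) (toLp 2 w)

theorem Matrix.abs_dotProduct_mulVec_le (v : m → ℝ) (A : Matrix m n ℝ) (w : n → ℝ) :
    |v ⬝ᵥ A *ᵥ w| ≤ ‖toLp 2 v‖ * ‖A‖ * ‖toLp 2 w‖ :=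
  calc |v ⬝ᵥ A *ᵥ w| ≤ ‖toLp 2 v‖ * ‖toLp 2 (A *ᵥ w)‖ := abs_dotProduct_le v _
    _ ≤ ‖toLp 2 v‖ * (‖A‖ * ‖toLp 2 w‖) := by gcongr; exact frobenius_norm_mulVec_le A w
    _ = ‖toLp 2 v‖ * ‖A‖ * ‖toLp 2 w‖ := (mul_assoc _ _ _).symm

theorem Matrix.frobenius_norm_sq_eq_sum (A : Matrix m n ℝ) : ‖A‖ ^ 2 = ∑ i, ∑ j, A i j ^ 2 := by
  change ‖toLp 2 fun i => toLp 2 fun j => A i j‖ ^ 2 = _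
  simp [PiLp.norm_sq_eq_of_L2]

theorem Matrix.frobenius_norm_sq_eq_trace (A : Matrix m n ℝ) : ‖A‖ ^ 2 = (Aᵀ * A).trace := by
  rw [frobenius_norm_sq_eq_sum, trace, Finset.sum_comm]
  simp [mul_apply, sq]

theorem Matrix.IsHermitian.frobenius_norm_sq_eq_trace {M : Matrix n n ℝ} (hM : M.IsHermitian) :
    ‖M‖ ^ 2 = (M * M).trace := by
  rw [Matrix.frobenius_norm_sq_eq_trace, ← conjTranspose_eq_transpose_of_trivial, hM.eq]

end FrobeniusNorm

section Resolvent

variable {n : Type*} [Fintype n] [DecidableEq n]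

theorem Matrix.frobenius_norm_inv_add_smul_one_le {Sig : Matrix n n ℝ} (hSig : Sig.PosDef)
    {γ : ℝ} (hγ : 0 ≤ γ) : ‖(Sig + γ • (1 : Matrix n n ℝ))⁻¹‖ ≤ ‖Sig⁻¹‖ := by
  have hShift : (Sig + γ • (1 : Matrix n n ℝ)).PosDef :=
    hSig.add_posSemidef (PosSemidef.one.smul hγ)
  set R := (Sig + γ • (1 : Matrix n n ℝ))⁻¹
  set C := Sig⁻¹
  have hR : R.PosDef := hShift.inv
  have hC : C.PosDef := hSig.inv
  have hres : C - R = γ • (C * R) := by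
    rw [inv_sub_inv ⟨fun _ => hShift.isUnit, fun _ => hSig.isUnit⟩, add_sub_cancel_left,
      mul_smul_comm, mul_one, smul_mul_assoc]
  have hsq : C * C - R * R = γ • (C * R * C + R * C * R) := by
    rw [show C * C - R * R = (C - R) * C + R * (C - R) by noncomm_ring, hres,
      smul_mul_assoc, mul_smul_comm, smul_add, ← mul_assoc]
  have hCRC : 0 ≤ (C * R * C).trace := by
    simpa only [hC.isHermitian.eq] using (hR.posSemidef.mul_mul_conjTranspose_same C).trace_nonneg
  have hRCR : 0 ≤ (R * C * R).trace := by
    simpa only [hR.isHermitian.eq] using (hC.posSemidef.mul_mul_conjTranspose_same R).trace_nonneg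
  have htrace : (R * R).trace ≤ (C * C).trace := by
    have := congrArg trace hsq
    simp only [trace_sub, trace_smul, trace_add, smul_eq_mul] at this
    linarith [mul_nonneg hγ (add_nonneg hCRC hRCR)]
  rw [← pow_le_pow_iff_left₀ (norm_nonneg _) (norm_nonneg _) two_ne_zero,
    hR.isHermitian.frobenius_norm_sq_eq_trace, hC.isHermitian.frobenius_norm_sq_eq_trace]
  exact htrace

end Resolvent

theorem dotProduct_mulVec_sub_dotProduct_mulVec {n R : Type*} [Fintype n] [CommRing R]
    (A B : Matrix n n R) (z μ : n → R) :
    z ⬝ᵥ A *ᵥ z - μ ⬝ᵥ B *ᵥ μ =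
      z ⬝ᵥ (A - B) *ᵥ z + z ⬝ᵥ B *ᵥ (z - μ) + (z - μ) ⬝ᵥ B *ᵥ μ := by
  simp only [sub_mulVec, mulVec_sub, dotProduct_sub, sub_dotProduct]
  ring

theorem frobNorm_eq_norm {J : ℕ} (A : Matrix (Fin J) (Fin J) ℝ) : frobNorm A = ‖A‖ := by
  rw [frobNorm, ← frobenius_norm_sq_eq_sum, Real.sqrt_sq (norm_nonneg A)]

theorem eNorm_eq_norm {J : ℕ} (v : Fin J → ℝ) : eNorm v = ‖toLp 2 v‖ := by
  rw [eNorm, EuclideanSpace.norm_eq]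
  simp

theorem quadratic_form_difference_bound_general {J : ℕ}
    (zbar μ : Fin J → ℝ) (S Sig : Matrix (Fin J) (Fin J) ℝ)
    (c γ : ℝ) (hγ : 0 < γ)
    (hSγ : (S + γ • (1 : Matrix (Fin J) (Fin J) ℝ)).PosDef)
    (hSig : Sig.PosDef)
    (hSinv : frobNorm (S + γ • (1 : Matrix (Fin J) (Fin J) ℝ))⁻¹ ≤ Real.sqrt J / γ)
    (hSiginv : frobNorm Sig⁻¹ ≤ c) :
    |dotProduct zbar (((S + γ • (1 : Matrix (Fin J) (Fin J) ℝ))⁻¹).mulVec zbar) -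
        dotProduct μ (((Sig + γ • (1 : Matrix (Fin J) (Fin J) ℝ))⁻¹).mulVec μ)| ≤
      (Real.sqrt J / γ) * eNorm zbar ^ 2 * frobNorm (Sig - S) * c +
        (eNorm zbar + eNorm μ) * eNorm (zbar - μ) * c := by
  simp only [frobNorm_eq_norm, eNorm_eq_norm] at *
  have hSigShift : (Sig + γ • (1 : Matrix (Fin J) (Fin J) ℝ)).PosDef :=
    hSig.add_posSemidef (PosSemidef.one.smul hγ.le)
  set A := (S + γ • (1 : Matrix (Fin J) (Fin J) ℝ))⁻¹
  set R := (Sig + γ • (1 : Matrix (Fin J) (Fin J) ℝ))⁻¹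
  have hR : ‖R‖ ≤ c := (frobenius_norm_inv_add_smul_one_le hSig hγ.le).trans hSiginv
  have hres : A - R = A * (Sig - S) * R := by
    rw [inv_sub_inv ⟨fun _ => hSigShift.isUnit, fun _ => hSγ.isUnit⟩, add_sub_add_right_eq_sub]
  have hPert : ‖A * (Sig - S) * R‖ ≤ Real.sqrt J / γ * ‖Sig - S‖ * c :=
    calc ‖A * (Sig - S) * R‖ ≤ ‖A‖ * ‖Sig - S‖ * ‖R‖ :=
          (frobenius_norm_mul _ _).trans (by gcongr; exact frobenius_norm_mul _ _)
      _ ≤ Real.sqrt J / γ * ‖Sig - S‖ * c := by gcongr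
  rw [dotProduct_mulVec_sub_dotProduct_mulVec, hres]
  calc _ ≤ _ := abs_add_three _ _ _
    _ ≤ ‖toLp 2 zbar‖ * (Real.sqrt J / γ * ‖Sig - S‖ * c) * ‖toLp 2 zbar‖
          + ‖toLp 2 zbar‖ * c * ‖toLp 2 (zbar - μ)‖ + ‖toLp 2 (zbar - μ)‖ * c * ‖toLp 2 μ‖ := by
      gcongr <;> refine (abs_dotProduct_mulVec_le _ _ _).trans ?_ <;> gcongr
    _ = _ := by ring

/-- bound on the difference of regularized quadratic forms. -/
theorem quadratic_form_difference_bound {J : ℕ}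
    (zbar μ : Fin J → ℝ) (S Sig : Matrix (Fin J) (Fin J) ℝ)
    (B c γ : ℝ) (hB : 0 < B) (hc : 0 < c) (hγ : 0 < γ)
    (hzbar : eNorm zbar ≤ 2 * B * Real.sqrt J)
    (hμ : eNorm μ ≤ 2 * B * Real.sqrt J)
    (hSsym : S.IsSymm) (hSigSym : Sig.IsSymm)
    (hSγ : (S + γ • (1 : Matrix (Fin J) (Fin J) ℝ)).PosDef)
    (hSig : Sig.PosDef)
    (hSinv : frobNorm (S + γ • (1 : Matrix (Fin J) (Fin J) ℝ))⁻¹ ≤ Real.sqrt J / γ)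
    (hSiginv : frobNorm Sig⁻¹ ≤ c) :
    |dotProduct zbar (((S + γ • (1 : Matrix (Fin J) (Fin J) ℝ))⁻¹).mulVec zbar) -
        dotProduct μ (((Sig + γ • (1 : Matrix (Fin J) (Fin J) ℝ))⁻¹).mulVec μ)| ≤
      (Real.sqrt J / γ) * eNorm zbar ^ 2 * frobNorm (Sig - S) * c +
        (eNorm zbar + eNorm μ) * eNorm (zbar - μ) * c :=
  quadratic_form_difference_bound_general zbar μ S Sig c γ hγ hSγ hSig hSinv hSiginv
end

section
/- Let 𝓖 be a finite-dimensional real vector space of measurable functions M → ℝ. Then 𝓖 is a VC-subgraph class with VC index at most dim(𝓖) + 2. -/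
/-- A collection of subsets shatters a finite set `F` if every subset of `F`
is cut out by an element of the collection. -/
def ShattersSet {S : Type*} (C : Set (Set S)) (F : Finset S) : Prop :=
  ∀ T ⊆ F, ∃ c ∈ C, (F : Set S) ∩ c = (T : Set S)

/-- VC index: the smallest `i` such that no set of size `i` is shattered. -/
noncomputable def vcIndex {S : Type*} (C : Set (Set S)) : ℕ :=
  sInf {i : ℕ | ∀ F : Finset S, F.card = i → ¬ ShattersSet C F}

/-- The subgraph of a real-valued function. -/
def subgraph {M : Type*} (f : M → ℝ) : Set (M × ℝ) := {p | p.2 < f p.1}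

open Module in
/-- Dudley's lemma: positivity sets of a finite-dimensional vector space of functions
cannot shatter a set of cardinality exceeding the dimension. -/
lemma key_not_shatters {S : Type*} (H : Submodule ℝ (S → ℝ)) [FiniteDimensional ℝ H]
    (F : Finset S) (hF : Module.finrank ℝ H < F.card) :
    ¬ ShattersSet ((fun h : S → ℝ => {x | 0 < h x}) '' (H : Set (S → ℝ))) F := by
  classical
  intro hsh
  -- evaluation map from H to functions on F
  let E : H →ₗ[ℝ] (↥F → ℝ) := LinearMap.pi fun x => (LinearMap.proj (x : S)).comp H.subtype
  have hrange : LinearMap.range E < ⊤ := by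
    rw [lt_top_iff_ne_top]
    intro htop
    have h1 : Module.finrank ℝ (↥F → ℝ) = F.card := by
      simp [Module.finrank_pi, Fintype.card_coe]
    have h2 : Module.finrank ℝ ↥(LinearMap.range E) ≤ Module.finrank ℝ ↥H :=
      LinearMap.finrank_range_le E
    rw [htop, finrank_top, h1] at h2
    omega
  obtain ⟨f, hf0, hker⟩ := Submodule.exists_le_ker_of_lt_top _ hrange
  -- the coefficient vector
  set μ₀ : S → ℝ := fun x => if hx : x ∈ F then f (Pi.single (⟨x, hx⟩ : ↥F) 1) else 0 with hμ₀
  have hsingle : ∀ (x : ↥F) (r : ℝ), f (Pi.single x r) = r * f (Pi.single x 1) := by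
    intro x r
    have : Pi.single x r = r • (Pi.single x (1 : ℝ) : ↥F → ℝ) := by
      funext y
      simp [Pi.single_apply, mul_ite]
    rw [this, map_smul]; rfl
  have hdecomp : ∀ w : ↥F → ℝ, f w = ∑ x : ↥F, w x * f (Pi.single x 1) := by
    intro w
    conv_lhs => rw [← Finset.univ_sum_single w]
    rw [map_sum]
    exact Finset.sum_congr rfl fun x _ => hsingle x (w x)
  have hsum : ∀ h ∈ H, ∑ x ∈ F, μ₀ x * h x = 0 := by
    intro h hh
    have key : ∑ x ∈ F.attach, μ₀ (x : S) * h (x : S) = ∑ x ∈ F, μ₀ x * h x :=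
      Finset.sum_attach F (fun x => μ₀ x * h x)
    rw [← key]
    have e1 : ∀ x : ↥F, μ₀ (x : S) * h (x : S) = h (x : S) * f (Pi.single x 1) := by
      intro x
      simp only [hμ₀]
      rw [dif_pos x.2, Subtype.coe_eta, mul_comm]
    rw [Finset.sum_congr rfl fun x _ => e1 x]
    have : ∑ x ∈ F.attach, h (x : S) * f (Pi.single x 1)
        = ∑ x : ↥F, (E ⟨h, hh⟩) x * f (Pi.single x 1) := by
      rw [← Finset.univ_eq_attach]; rfl
    rw [this, ← hdecomp (E ⟨h, hh⟩)]
    exact hker (LinearMap.mem_range_self E ⟨h, hh⟩)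
  -- μ₀ is nonzero somewhere on F
  have hne : ∃ x ∈ F, μ₀ x ≠ 0 := by
    by_contra hall
    push_neg at hall
    apply hf0
    refine LinearMap.ext fun w => ?_
    rw [hdecomp w]
    simp only [LinearMap.zero_apply]
    apply Finset.sum_eq_zero
    intro x _
    have : μ₀ (x : S) = f (Pi.single x 1) := by
      simp only [hμ₀]
      rw [dif_pos x.2, Subtype.coe_eta]
    rw [← this, hall _ x.2, mul_zero]
  obtain ⟨x₀, hx₀F, hx₀⟩ := hne
  -- WLOG μ is positive somewhere
  obtain ⟨μ, hμsum, x₁, hx₁F, hx₁pos⟩ :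
      ∃ μ : S → ℝ, (∀ h ∈ H, ∑ x ∈ F, μ x * h x = 0) ∧ ∃ x ∈ F, 0 < μ x := by
    rcases hx₀.lt_or_gt with hneg | hpos
    · refine ⟨-μ₀, ?_, x₀, hx₀F, by simpa using hneg⟩
      intro h hh
      have := hsum h hh
      simp only [Pi.neg_apply, neg_mul]
      rw [Finset.sum_neg_distrib, this, neg_zero]
    · exact ⟨μ₀, hsum, x₀, hx₀F, hpos⟩
  -- the shattered subset of positive coefficients
  set T : Finset S := F.filter (fun x => 0 < μ x) with hT
  obtain ⟨c, hcmem, hFc⟩ := hsh T (Finset.filter_subset _ _)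
  obtain ⟨h, hhH, rfl⟩ := hcmem
  have hiff : ∀ x ∈ F, (0 < h x ↔ x ∈ T) := by
    intro x hx
    constructor
    · intro hpos
      have : x ∈ (F : Set S) ∩ {y | 0 < h y} := ⟨hx, hpos⟩
      rw [hFc] at this
      exact this
    · intro hxT
      have : x ∈ (F : Set S) ∩ {y | 0 < h y} := by rw [hFc]; exact hxT
      exact this.2
  have hx₁T : x₁ ∈ T := Finset.mem_filter.2 ⟨hx₁F, hx₁pos⟩
  have hsplit : ∑ x ∈ T, μ x * h x + ∑ x ∈ F.filter (fun x => ¬ 0 < μ x), μ x * h x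
      = ∑ x ∈ F, μ x * h x := Finset.sum_filter_add_sum_filter_not F _ _
  have hpos : 0 < ∑ x ∈ T, μ x * h x := by
    apply Finset.sum_pos
    · intro x hx
      have hxF := Finset.filter_subset _ F hx
      have hμx := (Finset.mem_filter.1 hx).2
      have hhx := (hiff x hxF).2 hx
      positivity
    · exact ⟨x₁, hx₁T⟩
  have hnonneg : 0 ≤ ∑ x ∈ F.filter (fun x => ¬ 0 < μ x), μ x * h x := by
    apply Finset.sum_nonneg
    intro x hx
    obtain ⟨hxF, hμx⟩ := Finset.mem_filter.1 hx
    have hxT : x ∉ T := fun hc => hμx (Finset.mem_filter.1 hc).2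
    have hhx : ¬ 0 < h x := fun hc => hxT ((hiff x hxF).1 hc)
    push_neg at hμx hhx
    nlinarith
  rw [hμsum h hhH] at hsplit
  linarith

open Module in
/-- a finite-dimensional vector space of measurable functions is
VC-subgraph with VC index at most dim + 2. -/
theorem vcIndex_finite_dimensional {M : Type*} [MeasurableSpace M]
    (G : Submodule ℝ (M → ℝ)) [FiniteDimensional ℝ G]
    (hGmeas : ∀ g ∈ G, Measurable g) :
    vcIndex (subgraph '' (G : Set (M → ℝ))) ≤ Module.finrank ℝ G + 2 := by
  classical
  let L : (↥G × ℝ) →ₗ[ℝ] (M × ℝ → ℝ) :=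
    { toFun := fun gc => fun p => (gc.1 : M → ℝ) p.1 + gc.2 * p.2
      map_add' := by
        intro a b; funext p
        simp only [Submodule.coe_add, Pi.add_apply, Prod.fst_add, Prod.snd_add]
        ring
      map_smul' := by
        intro r a; funext p
        simp only [Prod.smul_fst, Prod.smul_snd, SetLike.val_smul, Pi.smul_apply,
          smul_eq_mul, RingHom.id_apply]
        ring }
  set H : Submodule ℝ (M × ℝ → ℝ) := LinearMap.range L with hHdef
  have hrank : Module.finrank ℝ ↥H ≤ Module.finrank ℝ ↥G + 1 := by
    calc Module.finrank ℝ ↥H ≤ Module.finrank ℝ (↥G × ℝ) := LinearMap.finrank_range_le L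
    _ = Module.finrank ℝ ↥G + 1 := by simp [Module.finrank_prod]
  have hsub : subgraph '' (G : Set (M → ℝ)) ⊆
      (fun h : M × ℝ → ℝ => {x | 0 < h x}) '' (H : Set (M × ℝ → ℝ)) := by
    rintro _ ⟨g, hg, rfl⟩
    refine ⟨L (⟨g, hg⟩, -1), ⟨(⟨g, hg⟩, -1), rfl⟩, ?_⟩
    ext p
    simp only [subgraph, Set.mem_setOf_eq, L, LinearMap.coe_mk, AddHom.coe_mk]
    constructor <;> intro <;> linarith
  apply Nat.sInf_le
  intro F hFcard hsh
  have hsh' : ShattersSet ((fun h : M × ℝ → ℝ => {x | 0 < h x}) '' (H : Set (M × ℝ → ℝ))) F := by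
    intro T hT
    obtain ⟨c, hc, hFc⟩ := hsh T hT
    exact ⟨c, hsub hc, hFc⟩
  exact key_not_shatters H F (by omega) hsh'
end

section
/- The class of functions 𝓕₁ = {x ↦ exp(−‖x − v‖₂²/(2σ²)) : σ > 0, v ∈ ℝ^d} on ℝ^d is a VC-subgraph class with VC index at most d + 4. -/
/-!
A set shattered by subgraphs of positive functions contains no point `(x, t)` with `t ≤ 0`,
since such a point lies in every subgraph. For `t > 0` we have
`t < exp (-‖x - v‖² / (2σ²))` iff `0 < -‖x - v‖² / (2σ²) - log t`, and the right-hand side is a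
linear functional of the feature vector `((‖x‖², 1, x), log t)`, which lives in a space of
dimension `d + 3`. Positivity sets of linear functionals of a feature map into a space of
dimension `n` cannot shatter `n + 1` points: a linear relation `∑ μₛ Φ(s) = 0` with some
`μⱼ > 0` forbids cutting out `{s | μₛ > 0}`, since then `∑ μₛ ℓ(Φ s)` would be both zero and
positive.
-/

open Module

theorem ShattersSet.mono {S : Type*} {C C' : Set (Set S)} {F : Finset S} (h : ShattersSet C F)
    (hC : ∀ c ∈ C, ∃ c' ∈ C', ∀ s ∈ F, s ∈ c' ↔ s ∈ c) : ShattersSet C' F := by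
  intro T hT
  obtain ⟨c, hc, hFc⟩ := h T hT
  obtain ⟨c', hc', hcc'⟩ := hC c hc
  refine ⟨c', hc', ?_⟩
  rw [← hFc]
  ext s
  exact and_congr_right fun hs => hcc' s hs

theorem ShattersSet.forall_pos_of_subgraph {M : Type*} {G : Set (M → ℝ)} {F : Finset (M × ℝ)}
    (h : ShattersSet (subgraph '' G) F) (hG : ∀ g ∈ G, ∀ x, 0 < g x) : ∀ p ∈ F, 0 < p.2 := by
  obtain ⟨_, ⟨g, hg, rfl⟩, hF⟩ := h ∅ (Finset.empty_subset F)
  intro p hp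
  by_contra! hp2
  have : p ∈ (F : Set (M × ℝ)) ∩ subgraph g := ⟨hp, hp2.trans_lt (hG g hg p.1)⟩
  simp [hF] at this

section Dudley

variable {S W : Type*} [AddCommGroup W] [Module ℝ W] [FiniteDimensional ℝ W]

theorem exists_sum_smul_eq_zero_pos_of_finrank_lt_card (Φ : S → W) {F : Finset S}
    (hF : finrank ℝ W < F.card) : ∃ μ : S → ℝ, ∑ s ∈ F, μ s • Φ s = 0 ∧ ∃ j ∈ F, 0 < μ j := by
  have hdep : ¬ LinearIndepOn ℝ Φ (F : Set S) := fun hli => by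
    have := hli.fintype_card_le_finrank
    simp only [Finset.coe_sort_coe, Fintype.card_coe] at this
    omega
  obtain ⟨μ, hμ, j, hjF, hj⟩ := not_linearIndepOn_finset_iff.1 hdep
  rcases hj.lt_or_gt with hneg | hpos
  · exact ⟨-μ, by simp [neg_smul, hμ], j, hjF, by simpa using hneg⟩
  · exact ⟨μ, hμ, j, hjF, hpos⟩

theorem not_shattersSet_of_finrank_lt_card (Φ : S → W) {F : Finset S}
    (hF : finrank ℝ W < F.card) :
    ¬ ShattersSet (Set.range fun ℓ : Dual ℝ W => {s | 0 < ℓ (Φ s)}) F := by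
  classical
  intro hshat
  obtain ⟨μ, hμ, j, hjF, hj⟩ := exists_sum_smul_eq_zero_pos_of_finrank_lt_card Φ hF
  obtain ⟨_, ⟨ℓ, rfl⟩, hT⟩ := hshat (F.filter (0 < μ ·)) (Finset.filter_subset _ _)
  have hsign : ∀ s ∈ F, 0 < ℓ (Φ s) ↔ 0 < μ s := fun s hs => by
    simpa [hs] using (Set.ext_iff.1 hT s)
  have hzero : ∑ s ∈ F, μ s * ℓ (Φ s) = 0 := by
    simpa using congrArg ℓ hμ
  have hpos : 0 < ∑ s ∈ F, μ s * ℓ (Φ s) := by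
    refine Finset.sum_pos' (fun s hs => ?_) ⟨j, hjF, mul_pos hj ((hsign j hjF).2 hj)⟩
    by_cases hμs : 0 < μ s
    · exact (mul_pos hμs ((hsign s hs).2 hμs)).le
    · exact mul_nonneg_of_nonpos_of_nonpos (not_lt.1 hμs) (not_lt.1 (mt (hsign s hs).1 hμs))
  exact hpos.ne' hzero

end Dudley

theorem exists_dual_eq_mul_norm_sub_sq {E : Type*} [NormedAddCommGroup E] [InnerProductSpace ℝ E]
    (c : ℝ) (v : E) : ∃ ℓ : Dual ℝ (ℝ × ℝ × E), ∀ x, ℓ (‖x‖ ^ 2, 1, x) = c * ‖x - v‖ ^ 2 :=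
  ⟨(c • LinearMap.id).coprod (((c * ‖v‖ ^ 2) • LinearMap.id).coprod ((-2 * c) • innerₛₗ ℝ v)),
    fun x => by simp [norm_sub_sq_real, real_inner_comm]; ring⟩

theorem mem_subgraph_exp_iff {M : Type*} (h : M → ℝ) {p : M × ℝ} (hp : 0 < p.2) :
    p ∈ subgraph (fun x => Real.exp (h x)) ↔ 0 < h p.1 - Real.log p.2 :=
  (sub_pos.trans (Real.log_lt_iff_lt_exp hp)).symm

/-- the isotropic Gaussian kernel feature class on ℝ^d is
VC-subgraph with VC index at most d + 4. -/
theorem vcIndex_isotropic_gaussian (d : ℕ) :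
    vcIndex (subgraph ''
      {f : EuclideanSpace ℝ (Fin d) → ℝ |
        ∃ σ : ℝ, 0 < σ ∧ ∃ v : EuclideanSpace ℝ (Fin d),
          f = fun x => Real.exp (-(‖x - v‖ ^ 2 / (2 * σ ^ 2)))}) ≤ d + 4 := by
  let Φ : EuclideanSpace ℝ (Fin d) × ℝ → (ℝ × ℝ × EuclideanSpace ℝ (Fin d)) × ℝ :=
    fun p => ((‖p.1‖ ^ 2, 1, p.1), Real.log p.2)
  refine Nat.sInf_le fun F hcard hshat => ?_
  have hpos := hshat.forall_pos_of_subgraph (by rintro _ ⟨σ, -, v, rfl⟩ x; positivity)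
  have hdim : finrank ℝ ((ℝ × ℝ × EuclideanSpace ℝ (Fin d)) × ℝ) < F.card := by
    simp only [finrank_prod, finrank_self, finrank_euclideanSpace, Fintype.card_fin, hcard]
    omega
  refine not_shattersSet_of_finrank_lt_card Φ hdim (hshat.mono ?_)
  rintro _ ⟨f, ⟨σ, -, v, rfl⟩, rfl⟩
  obtain ⟨ℓ, hℓ⟩ := exists_dual_eq_mul_norm_sub_sq (-(2 * σ ^ 2)⁻¹) v
  refine ⟨_, ⟨ℓ.coprod (-LinearMap.id), rfl⟩, fun p hp => ?_⟩
  rw [mem_subgraph_exp_iff _ (hpos p hp)]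
  simp [Φ, hℓ, sub_eq_add_neg, div_eq_inv_mul]
end
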